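/- arXiv:1610.08214 — 7 statements merged into one kernel-verified Lean document; each statement's English description precedes it below -/
import Mathlib

section
/- Let n ≥ 2 and let f : Γ₊ → ℝ be smooth, symmetric, positively homogeneous of degree one, normalized (f(1,…,1) = 1), and convex. Then for every λ ∈ Γ₊ one has f(λ) ≥ H(λ)/n and ∑_{i=1}^n ∂f/∂λᵢ(λ) ≤ 1. -/
/-- The open positive cone Γ₊ = {λ ∈ ℝⁿ : λᵢ > 0 for all i}. -/
def posCone (n : ℕ) : Set (Fin n → ℝ) := {x | ∀ i, 0 < x i}

lemma posCone_isOpen (n : ℕ) : IsOpen (posCone n) := by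
  have : posCone n = ⋂ i, (fun x : Fin n → ℝ => x i) ⁻¹' Set.Ioi 0 := by
    ext x; simp [posCone]
  rw [this]
  exact isOpen_iInter_of_finite fun i => isOpen_Ioi.preimage (continuous_apply i)

/-- Gradient inequality for convex functions. -/
lemma grad_ineq {n : ℕ} {f : (Fin n → ℝ) → ℝ} {s : Set (Fin n → ℝ)}
    (hconv : ConvexOn ℝ s f) {x y : Fin n → ℝ} (hx : x ∈ s) (hy : y ∈ s)
    (hd : DifferentiableAt ℝ f x) :
    fderiv ℝ f x (y - x) ≤ f y - f x := by
  set c : ℝ → (Fin n → ℝ) := ⇑(AffineMap.lineMap x y : ℝ →ᵃ[ℝ] (Fin n → ℝ)) with hc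
  have hc0 : c 0 = x := by simp [hc]
  have hc1 : c 1 = y := by simp [hc]
  have hsub : Set.Icc (0:ℝ) 1 ⊆ c ⁻¹' s := by
    intro t ht
    have : x + t • (y - x) ∈ s := hconv.1.add_smul_sub_mem hx hy ht
    simpa [hc, AffineMap.lineMap_apply, add_comm] using this
  have hφ : ConvexOn ℝ (Set.Icc (0:ℝ) 1) (f ∘ c) :=
    (hconv.comp_affineMap (AffineMap.lineMap x y : ℝ →ᵃ[ℝ] (Fin n → ℝ))).subset
      hsub (convex_Icc 0 1)
  have hcd : HasDerivAt c (y - x) 0 := AffineMap.hasDerivAt_lineMap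
  have hF : HasFDerivAt f (fderiv ℝ f x) (c 0) := by rw [hc0]; exact hd.hasFDerivAt
  have hder : HasDerivAt (f ∘ c) (fderiv ℝ f x (y - x)) 0 :=
    hF.comp_hasDerivAt 0 hcd
  have key := hφ.le_slope_of_hasDerivAt (x := 0) (y := 1) (by simp) (by simp) one_pos hder
  have hslope : slope (f ∘ c) 0 1 = f y - f x := by
    simp [slope, hc0, hc1]
  rwa [hslope] at key

/-- Convex case of Lemma 2.2: for f smooth, symmetric, 1-homogeneous, normalized and
convex on the positive cone, one has f(λ) ≥ H(λ)/n and ∑ᵢ ∂f/∂λᵢ(λ) ≤ 1 on Γ₊. -/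
theorem stmt_1 (n : ℕ) (hn : 2 ≤ n) (f : (Fin n → ℝ) → ℝ)
    (hsmooth : ContDiffOn ℝ (⊤ : ℕ∞) f (posCone n))
    (hsym : ∀ (σ : Equiv.Perm (Fin n)), ∀ x ∈ posCone n, f (x ∘ σ) = f x)
    (hhom : ∀ k : ℝ, 0 < k → ∀ x ∈ posCone n, f (k • x) = k * f x)
    (hnorm : f (fun _ => 1) = 1)
    (hconv : ConvexOn ℝ (posCone n) f) :
    ∀ lam ∈ posCone n,
      (∑ i, lam i) / n ≤ f lam ∧
      ∑ i, fderivWithin ℝ f (posCone n) lam (Pi.single i 1) ≤ 1 := by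
  intro lam hlam
  have hopen := posCone_isOpen n
  have hnpos : (0:ℝ) < n := by positivity
  set H : ℝ := ∑ i, lam i with hH
  have hHpos : 0 < H := Finset.sum_pos (fun i _ => hlam i) ⟨⟨0, by omega⟩, Finset.mem_univ _⟩
  have hone : (fun _ : Fin n => (1:ℝ)) ∈ posCone n := fun i => one_pos
  -- Part A
  have key : ∀ i j : Fin n, ∑ σ : Equiv.Perm (Fin n), lam (σ i)
      = ∑ σ : Equiv.Perm (Fin n), lam (σ j) := by
    intro i j
    rw [← Equiv.sum_comp (Equiv.mulRight (Equiv.swap i j)) (fun σ => lam (σ i))]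
    simp [Equiv.Perm.mul_apply]
  have hfact : (0:ℝ) < (Nat.factorial n : ℝ) := by positivity
  have hS : ∀ i : Fin n, ∑ σ : Equiv.Perm (Fin n), lam (σ i)
      = (Nat.factorial n : ℝ) * H / n := by
    intro i
    have h1 : ∑ j : Fin n, ∑ σ : Equiv.Perm (Fin n), lam (σ j)
        = (Nat.factorial n : ℝ) * H := by
      rw [Finset.sum_comm]
      have h : ∀ σ : Equiv.Perm (Fin n), ∑ j, lam (σ j) = H := fun σ => Equiv.sum_comp σ lam
      rw [Finset.sum_congr rfl fun σ _ => h σ, Finset.sum_const, Finset.card_univ,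
        Fintype.card_perm, Fintype.card_fin, nsmul_eq_mul]
    have h2 : ∑ j : Fin n, ∑ σ : Equiv.Perm (Fin n), lam (σ j)
        = (n : ℝ) * ∑ σ : Equiv.Perm (Fin n), lam (σ i) := by
      rw [Finset.sum_congr rfl fun j _ => key j i, Finset.sum_const, Finset.card_univ,
        Fintype.card_fin, nsmul_eq_mul]
    rw [h2] at h1
    field_simp
    linarith
  have hjensen := hconv.map_sum_le (t := Finset.univ)
      (w := fun _ : Equiv.Perm (Fin n) => ((Nat.factorial n : ℝ))⁻¹)
      (p := fun σ => lam ∘ σ)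
      (fun _ _ => by positivity)
      (by
        rw [Finset.sum_const, Finset.card_univ, Fintype.card_perm, Fintype.card_fin,
          nsmul_eq_mul]
        field_simp)
      (fun σ _ => fun i => hlam (σ i))
  simp only [smul_eq_mul] at hjensen
  have hcenter : (∑ σ : Equiv.Perm (Fin n), ((Nat.factorial n : ℝ))⁻¹ • (lam ∘ σ))
      = fun _ : Fin n => H / n := by
    funext i
    rw [Finset.sum_apply]
    simp only [Pi.smul_apply, Function.comp_apply, smul_eq_mul]
    rw [← Finset.mul_sum, hS i]
    field_simp
  rw [hcenter] at hjensen
  have hrhs : ∑ σ : Equiv.Perm (Fin n), ((Nat.factorial n : ℝ))⁻¹ * f (lam ∘ σ)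
      = f lam := by
    have h : ∀ σ : Equiv.Perm (Fin n), f (lam ∘ σ) = f lam := fun σ => hsym σ lam hlam
    rw [Finset.sum_congr rfl fun σ _ => by rw [h σ], Finset.sum_const, Finset.card_univ,
      Fintype.card_perm, Fintype.card_fin, nsmul_eq_mul]
    field_simp
  rw [hrhs] at hjensen
  have hval : f (fun _ : Fin n => H / n) = H / n := by
    have h1 : (H / n) • (fun _ : Fin n => (1:ℝ)) = fun _ : Fin n => H / n := by
      funext i; simp
    have := hhom (H / n) (by positivity) _ hone
    rw [h1, hnorm] at this
    simpa using this
  refine ⟨by rw [← hval]; exact hjensen, ?_⟩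
  -- Part B
  have hd : DifferentiableAt ℝ f lam :=
    (hsmooth.contDiffAt (hopen.mem_nhds hlam)).differentiableAt (by simp)
  have hfw : fderivWithin ℝ f (posCone n) lam = fderiv ℝ f lam :=
    fderivWithin_of_isOpen hopen hlam
  set L := fderiv ℝ f lam with hL
  -- Euler: L lam = f lam
  have heuler : L lam = f lam := by
    have hcurve : HasDerivAt (fun t : ℝ => t • lam) lam 1 := by
      simpa [one_smul] using (hasDerivAt_id (1:ℝ)).smul_const lam
    have hF : HasFDerivAt f L ((fun t : ℝ => t • lam) 1) := by
      simpa [one_smul] using hd.hasFDerivAt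
    have hcomp : HasDerivAt (fun t : ℝ => f (t • lam)) (L lam) 1 :=
      hF.comp_hasDerivAt 1 hcurve
    have heq : (fun t : ℝ => f (t • lam)) =ᶠ[nhds (1:ℝ)] fun t => t * f lam := by
      filter_upwards [Ioi_mem_nhds (show (0:ℝ) < 1 by norm_num)] with t ht
      exact hhom t ht lam hlam
    have hcomp' : HasDerivAt (fun t : ℝ => t * f lam) (L lam) 1 :=
      hcomp.congr_of_eventuallyEq heq.symm
    exact hcomp'.unique (hasDerivAt_mul_const (f lam))
  have hgrad := grad_ineq hconv hlam hone hd
  have hones : (fun _ : Fin n => (1:ℝ)) = ∑ i : Fin n, Pi.single i (1:ℝ) := by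
    funext j
    rw [Finset.sum_apply]
    simp [Pi.single_apply]
  have hLones : L (fun _ : Fin n => (1:ℝ)) = ∑ i, L (Pi.single i 1) := by
    rw [hones, map_sum]
  have hsplit : L ((fun _ : Fin n => (1:ℝ)) - lam)
      = L (fun _ : Fin n => (1:ℝ)) - L lam := map_sub L _ _
  rw [hsplit, heuler, hnorm] at hgrad
  have hfin : L (fun _ : Fin n => (1:ℝ)) ≤ 1 := by linarith
  rw [hLones] at hfin
  calc ∑ i, fderivWithin ℝ f (posCone n) lam (Pi.single i 1)
      = ∑ i, L (Pi.single i 1) := by rw [hfw]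
    _ ≤ 1 := hfin
end

section
/- Let n ≥ 2 and let f : Γ₊ → ℝ be smooth, symmetric, strictly monotone, positively homogeneous of degree one, positive, and concave. Then for every λ ∈ Γ₊ one has H(λ) · ∑_{i=1}^n ∂f/∂λᵢ(λ)·λᵢ² ≤ f(λ) · |λ|² (i.e. H·tr_{Ḟ}(A𝒲) − F|A|² ≤ 0 in the paper's notation). -/
/-- Gradient inequality for a concave function on an open set. -/
lemma concave_grad_ineq {n : ℕ} {f : (Fin n → ℝ) → ℝ} {S : Set (Fin n → ℝ)}
    (hS : IsOpen S) (hconc : ConcaveOn ℝ S f) {x : Fin n → ℝ} (hx : x ∈ S)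
    (hd : DifferentiableAt ℝ f x) {y : Fin n → ℝ} (hy : y ∈ S) :
    f y ≤ f x + fderiv ℝ f x (y - x) := by
  set D := fderiv ℝ f x with hD
  -- the affine line through x and y
  set L : ℝ →ᵃ[ℝ] (Fin n → ℝ) := AffineMap.lineMap x y with hL
  have hL0 : L 0 = x := AffineMap.lineMap_apply_zero x y
  have hL1 : L 1 = y := AffineMap.lineMap_apply_one x y
  have hg : ConcaveOn ℝ (L ⁻¹' S) (f ∘ L) := hconc.comp_affineMap L
  have h0 : (0 : ℝ) ∈ L ⁻¹' S := by simp [Set.mem_preimage, hL0, hx]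
  have h1 : (1 : ℝ) ∈ L ⁻¹' S := by simp [Set.mem_preimage, hL1, hy]
  -- derivative of f ∘ L at 0
  have hLd : HasDerivAt (fun t : ℝ => L t) (y - x) 0 := by
    have : (fun t : ℝ => L t) = fun t : ℝ => x + t • (y - x) := by
      funext t
      simp [hL, AffineMap.lineMap_apply_module]
      module
    rw [this]
    simpa using ((hasDerivAt_id (0 : ℝ)).smul_const (y - x)).const_add x
  have hfd : HasDerivAt (f ∘ L) (D (y - x)) 0 := by
    have hd' : HasFDerivAt f D ((fun t : ℝ => L t) 0) := by simpa [hL0] using hd.hasFDerivAt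
    exact hd'.comp_hasDerivAt 0 hLd
  have := hg.slope_le_of_hasDerivAt h0 h1 one_pos hfd
  rw [slope_def_field] at this
  simp only [Function.comp_apply, hL0, hL1] at this
  have h2 : (f y - f x) / (1 - 0 : ℝ) = f y - f x := by norm_num
  rw [h2] at this
  linarith

/-- Concave case of Lemma 2.4: for f smooth, symmetric, strictly monotone, 1-homogeneous,
positive and concave on Γ₊, one has H(λ)·∑ᵢ (∂f/∂λᵢ)λᵢ² ≤ f(λ)·|λ|². -/
theorem stmt_4 (n : ℕ) (hn : 2 ≤ n) (f : (Fin n → ℝ) → ℝ)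
    (hsmooth : ContDiffOn ℝ (⊤ : ℕ∞) f (posCone n))
    (hsym : ∀ (σ : Equiv.Perm (Fin n)), ∀ x ∈ posCone n, f (x ∘ σ) = f x)
    (hmono : ∀ x ∈ posCone n, ∀ i, 0 < fderivWithin ℝ f (posCone n) x (Pi.single i 1))
    (hhom : ∀ k : ℝ, 0 < k → ∀ x ∈ posCone n, f (k • x) = k * f x)
    (hpos : ∀ x ∈ posCone n, 0 < f x)
    (hconc : ConcaveOn ℝ (posCone n) f) :
    ∀ lam ∈ posCone n,
      (∑ i, lam i) * (∑ i, fderivWithin ℝ f (posCone n) lam (Pi.single i 1) * (lam i) ^ 2)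
        ≤ f lam * (∑ i, (lam i) ^ 2) := by
  intro lam hlam
  have hopen := posCone_isOpen n
  have hdiff : DifferentiableAt ℝ f lam := by
    have := (hsmooth.differentiableOn (by simp)) lam hlam
    exact this.differentiableAt (hopen.mem_nhds hlam)
  have hfw : fderivWithin ℝ f (posCone n) lam = fderiv ℝ f lam :=
    fderivWithin_of_isOpen hopen hlam
  set D := fderiv ℝ f lam with hDdef
  set F : Fin n → ℝ := fun i => D (Pi.single i 1) with hFdef
  -- rewrite the goal in terms of F
  rw [hfw]
  -- Euler identity: f lam = ∑ i, F i * lam i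
  have euler : f lam = ∑ i, F i * lam i := by
    have hlin : HasDerivAt (fun t : ℝ => t • lam) lam 1 := by
      simpa using (hasDerivAt_id (1 : ℝ)).smul_const lam
    have h1 : HasDerivAt (fun t : ℝ => f (t • lam)) (D lam) 1 := by
      have hd1 : HasFDerivAt f D ((fun t : ℝ => t • lam) 1) := by
        simpa [one_smul] using hdiff.hasFDerivAt
      exact hd1.comp_hasDerivAt 1 hlin
    have hev : (fun t : ℝ => t * f lam) =ᶠ[nhds (1 : ℝ)] fun t => f (t • lam) := by
      filter_upwards [Ioi_mem_nhds (show (0 : ℝ) < 1 by norm_num)] with t ht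
      exact (hhom t ht lam hlam).symm
    have h2 : HasDerivAt (fun t : ℝ => t * f lam) (D lam) 1 := h1.congr_of_eventuallyEq hev
    have h3 : HasDerivAt (fun t : ℝ => t * f lam) (f lam) 1 := by
      simpa using (hasDerivAt_id (1 : ℝ)).mul_const (f lam)
    have hDl : D lam = f lam := h2.unique h3
    have hsum : lam = ∑ i, lam i • (Pi.single i 1 : Fin n → ℝ) := by
      funext j
      simp [Finset.sum_apply, Pi.single_apply]
    calc f lam = D lam := hDl.symm
      _ = D (∑ i, lam i • (Pi.single i 1 : Fin n → ℝ)) := by rw [← hsum]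
      _ = ∑ i, lam i * F i := by
          rw [map_sum]; simp [hFdef, smul_eq_mul]
      _ = ∑ i, F i * lam i := by simp [mul_comm]
  -- key: monotonicity from symmetry + concavity: (lam i - lam j)*(F i - F j) ≤ 0
  have key : ∀ i j, 0 ≤ (lam j - lam i) * (F i - F j) := by
    intro i j
    by_cases hij : i = j
    · simp [hij]
    -- swap values of lam at i and j
    set mu : Fin n → ℝ := lam ∘ (Equiv.swap i j) with hmu
    have hmuS : mu ∈ posCone n := fun k => hlam _
    have hmuf : f mu = f lam := hsym (Equiv.swap i j) lam hlam
    have hdiffv : mu - lam = (lam j - lam i) • (Pi.single i 1 - Pi.single j 1) := by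
      funext k
      by_cases hk : k = i
      · subst hk
        simp [hmu, Equiv.swap_apply_left, Pi.single_apply, hij]
      · by_cases hk2 : k = j
        · subst hk2
          simp [hmu, Equiv.swap_apply_right, Pi.single_apply, Ne.symm hij]
        · simp [hmu, Equiv.swap_apply_of_ne_of_ne hk hk2, Pi.single_apply, hk, hk2]
    have hineq := concave_grad_ineq hopen hconc hlam hdiff hmuS
    rw [hdiffv] at hineq
    rw [map_smul, map_sub] at hineq
    have : f lam ≤ f lam + (lam j - lam i) * (F i - F j) := by
      simpa [hmuf, smul_eq_mul, hFdef] using hineq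
    linarith
  -- final algebraic step
  rw [euler]
  have inner_eq : ∀ i : Fin n,
      ∑ j, lam i * lam j * ((lam j - lam i) * (F i - F j))
      = (F i * lam i) * (∑ j, lam j ^ 2) - (F i * lam i ^ 2) * (∑ j, lam j)
        - lam i * (∑ j, F j * lam j ^ 2) + lam i ^ 2 * (∑ j, F j * lam j) := by
    intro i
    rw [Finset.mul_sum, Finset.mul_sum, Finset.mul_sum, Finset.mul_sum, ← Finset.sum_sub_distrib,
        ← Finset.sum_sub_distrib, ← Finset.sum_add_distrib]
    exact Finset.sum_congr rfl fun j _ => by ring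
  have expand : ∑ i, ∑ j, lam i * lam j * ((lam j - lam i) * (F i - F j))
      = 2 * ((∑ i, F i * lam i) * (∑ i, lam i ^ 2) - (∑ i, lam i) * (∑ i, F i * lam i ^ 2)) := by
    rw [Finset.sum_congr rfl fun i _ => inner_eq i]
    rw [Finset.sum_add_distrib, Finset.sum_sub_distrib, Finset.sum_sub_distrib,
        ← Finset.sum_mul, ← Finset.sum_mul, ← Finset.sum_mul, ← Finset.sum_mul]
    ring
  have nonneg : 0 ≤ ∑ i, ∑ j, lam i * lam j * ((lam j - lam i) * (F i - F j)) :=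
    Finset.sum_nonneg fun i _ => Finset.sum_nonneg fun j _ =>
      mul_nonneg (mul_nonneg (hlam i).le (hlam j).le) (key i j)
  rw [expand] at nonneg
  linarith
end

section
/- Let n ≥ 2 and let f : Γ₊ → ℝ be smooth, symmetric, strictly monotone, positively homogeneous of degree one, positive, and convex. Then for every λ ∈ Γ₊ one has H(λ) · ∑_{i=1}^n ∂f/∂λᵢ(λ)·λᵢ² ≥ f(λ) · |λ|² (i.e. H·tr_{Ḟ}(A𝒲) − F|A|² ≥ 0 in the paper's notation). -/
/-- Convex case of Lemma 2.4: for f smooth, symmetric, strictly monotone, 1-homogeneous,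
positive and convex on Γ₊, one has H(λ)·∑ᵢ (∂f/∂λᵢ)λᵢ² ≥ f(λ)·|λ|². -/
theorem stmt_5 (n : ℕ) (hn : 2 ≤ n) (f : (Fin n → ℝ) → ℝ)
    (hsmooth : ContDiffOn ℝ (⊤ : ℕ∞) f (posCone n))
    (hsym : ∀ (σ : Equiv.Perm (Fin n)), ∀ x ∈ posCone n, f (x ∘ σ) = f x)
    (hmono : ∀ x ∈ posCone n, ∀ i, 0 < fderivWithin ℝ f (posCone n) x (Pi.single i 1))
    (hhom : ∀ k : ℝ, 0 < k → ∀ x ∈ posCone n, f (k • x) = k * f x)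
    (hpos : ∀ x ∈ posCone n, 0 < f x)
    (hconv : ConvexOn ℝ (posCone n) f) :
    ∀ lam ∈ posCone n,
      f lam * (∑ i, (lam i) ^ 2)
        ≤ (∑ i, lam i) * (∑ i, fderivWithin ℝ f (posCone n) lam (Pi.single i 1) * (lam i) ^ 2) := by
  intro lam hlam
  have hopen := posCone_isOpen n
  have hdiff : DifferentiableAt ℝ f lam :=
    ((hsmooth lam hlam).contDiffAt (hopen.mem_nhds hlam)).differentiableAt (by simp)
  have hfd : HasFDerivAt f (fderiv ℝ f lam) lam := hdiff.hasFDerivAt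
  have hfw : fderivWithin ℝ f (posCone n) lam = fderiv ℝ f lam :=
    fderivWithin_of_isOpen hopen hlam
  set D := fderiv ℝ f lam with hD
  set g : Fin n → ℝ := fun i => D (Pi.single i 1) with hg
  -- general fact: derivative at lam in a direction v with lam + t•v in the cone and
  -- f(lam + t•v) ≤ f lam for t ∈ (0,1] is nonpositive
  have hdir : ∀ v : Fin n → ℝ,
      (∀ t ∈ Set.Ioc (0:ℝ) 1, f (lam + t • v) ≤ f lam) → D v ≤ 0 := by
    intro v hv
    have h1 : HasDerivAt (fun t : ℝ => lam + t • v) v 0 := by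
      simpa using ((hasDerivAt_id (0:ℝ)).smul_const v).const_add lam
    have hφ : HasDerivAt (fun t : ℝ => f (lam + t • v)) (D v) 0 := by
      have hfd' : HasFDerivAt f D ((fun t : ℝ => lam + t • v) 0) := by simpa using hfd
      exact hfd'.comp_hasDerivAt 0 h1
    have hsl := hasDerivAt_iff_tendsto_slope.mp hφ
    have hsl' : Filter.Tendsto (slope (fun t : ℝ => f (lam + t • v)) 0) (nhdsWithin 0 (Set.Ioi 0))
        (nhds (D v)) :=
      hsl.mono_left (nhdsWithin_mono _ (fun x hx => ne_of_gt hx))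
    refine le_of_tendsto hsl' ?_
    filter_upwards [Ioc_mem_nhdsGT_of_mem (by norm_num : (0:ℝ) ∈ Set.Ico (0:ℝ) 1)] with t ht
    have hle := hv t ht
    have h0 : (fun t : ℝ => f (lam + t • v)) 0 = f lam := by simp
    rw [slope_def_field, div_nonpos_iff]
    right
    constructor
    · simp only [h0]; simpa using sub_nonpos.mpr hle
    · simpa using ht.1.le
  -- Euler's identity
  have heuler : f lam = ∑ i, g i * lam i := by
    have h1 : HasDerivAt (fun k : ℝ => k • lam) lam 1 := by
      simpa using (hasDerivAt_id (1:ℝ)).smul_const lam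
    have hψ : HasDerivAt (fun k : ℝ => f (k • lam)) (D lam) 1 := by
      have hfd' : HasFDerivAt f D ((fun k : ℝ => k • lam) 1) := by simpa using hfd
      exact hfd'.comp_hasDerivAt 1 h1
    have hψ' : HasDerivAt (fun k : ℝ => f (k • lam)) (f lam) 1 := by
      have hmul : HasDerivAt (fun k : ℝ => k * f lam) (f lam) 1 := by
        simpa using (hasDerivAt_id (1:ℝ)).mul_const (f lam)
      refine hmul.congr_of_eventuallyEq ?_
      filter_upwards [isOpen_Ioi.mem_nhds (by norm_num : (1:ℝ) ∈ Set.Ioi (0:ℝ))] with k hk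
      exact hhom k hk lam hlam
    have hDl : D lam = f lam := hψ.unique hψ'
    have hsum : D lam = ∑ i, g i * lam i := by
      have hl : lam = ∑ i, lam i • (Pi.single i 1 : Fin n → ℝ) := by
        conv_lhs => rw [← Finset.univ_sum_single lam]
        refine Finset.sum_congr rfl fun i _ => ?_
        ext k
        by_cases h : k = i <;> simp [Pi.single_apply, h]
      calc D lam = D (∑ i, lam i • (Pi.single i 1 : Fin n → ℝ)) := by rw [← hl]
        _ = ∑ i, lam i • D ((Pi.single i 1 : Fin n → ℝ)) := by
            rw [map_sum]; exact Finset.sum_congr rfl fun i _ => by rw [map_smul]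
        _ = ∑ i, g i * lam i := Finset.sum_congr rfl fun i _ => by
            simp [hg, mul_comm]
    rw [← hDl, hsum]
  -- symmetry + convexity sign fact
  have hsign : ∀ i j, 0 ≤ (lam i - lam j) * (g i - g j) := by
    intro i j
    rcases eq_or_ne i j with rfl | hij
    · simp
    set σ := Equiv.swap i j with hσ
    set y : Fin n → ℝ := lam ∘ σ with hy
    have hymem : y ∈ posCone n := fun k => hlam (σ k)
    have hfy : f y = f lam := hsym σ lam hlam
    set v : Fin n → ℝ := y - lam with hv
    have hvle : ∀ t ∈ Set.Ioc (0:ℝ) 1, f (lam + t • v) ≤ f lam := by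
      intro t ht
      have hcomb : (1 - t) • lam + t • y = lam + t • v := by
        ext k; simp [hv]; ring
      have := hconv.2 hlam hymem (by linarith [ht.2] : (0:ℝ) ≤ 1 - t) ht.1.le (by ring)
      rw [hcomb, hfy] at this
      calc f (lam + t • v) ≤ (1 - t) * f lam + t * f lam := this
        _ = f lam := by ring
    have hDv : D v ≤ 0 := hdir v hvle
    have hvexp : v = (lam j - lam i) • (Pi.single i 1 : Fin n → ℝ) + (lam i - lam j) • (Pi.single j 1 : Fin n → ℝ) := by
      ext k
      by_cases hki : k = i
      · subst hki
        simp [hv, hy, hσ, Equiv.swap_apply_left, Pi.single_apply, hij]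
      · by_cases hkj : k = j
        · subst hkj
          simp [hv, hy, hσ, Equiv.swap_apply_right, Pi.single_apply, Ne.symm hij]
        · simp [hv, hy, hσ, Equiv.swap_apply_of_ne_of_ne hki hkj, Pi.single_apply, hki, hkj]
    have hDveq : D v = (lam j - lam i) * g i + (lam i - lam j) * g j := by
      rw [hvexp, map_add, map_smul, map_smul]
      simp [hg]
    nlinarith [hDv, hDveq]
  -- conclude
  simp only [hfw]
  rw [heuler]
  have key : ∀ i j : Fin n,
      0 ≤ (lam i * (g j * lam j ^ 2) - g i * lam i * lam j ^ 2)
        + (lam j * (g i * lam i ^ 2) - g j * lam j * lam i ^ 2) := by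
    intro i j
    have h1 := hsign i j
    have h2 := (hlam i).le
    have h3 := (hlam j).le
    nlinarith [mul_nonneg h2 h3, hsign i j]
  have hsumkey : 0 ≤ ∑ i, ∑ j, ((lam i * (g j * lam j ^ 2) - g i * lam i * lam j ^ 2)
        + (lam j * (g i * lam i ^ 2) - g j * lam j * lam i ^ 2)) :=
    Finset.sum_nonneg fun i _ => Finset.sum_nonneg fun j _ => key i j
  have hcomm : ∑ i, ∑ j, (lam j * (g i * lam i ^ 2) - g j * lam j * lam i ^ 2)
      = ∑ i, ∑ j, (lam i * (g j * lam j ^ 2) - g i * lam i * lam j ^ 2) :=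
    Finset.sum_comm
  have hdistrib : ∑ i, ∑ j, ((lam i * (g j * lam j ^ 2) - g i * lam i * lam j ^ 2)
        + (lam j * (g i * lam i ^ 2) - g j * lam j * lam i ^ 2))
      = (∑ i, ∑ j, (lam i * (g j * lam j ^ 2) - g i * lam i * lam j ^ 2))
        + ∑ i, ∑ j, (lam j * (g i * lam i ^ 2) - g j * lam j * lam i ^ 2) := by
    rw [← Finset.sum_add_distrib]
    exact Finset.sum_congr rfl fun i _ => by rw [← Finset.sum_add_distrib]
  have hT : 0 ≤ ∑ i, ∑ j, (lam i * (g j * lam j ^ 2) - g i * lam i * lam j ^ 2) := by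
    rw [hdistrib, hcomm] at hsumkey; linarith
  have hexp : (∑ i, lam i) * (∑ j, g j * lam j ^ 2) - (∑ i, g i * lam i) * (∑ j, lam j ^ 2)
      = ∑ i, ∑ j, (lam i * (g j * lam j ^ 2) - g i * lam i * lam j ^ 2) := by
    rw [Finset.sum_mul_sum, Finset.sum_mul_sum, ← Finset.sum_sub_distrib]
    refine Finset.sum_congr rfl fun i _ => ?_
    rw [← Finset.sum_sub_distrib]
  linarith [hexp ▸ hT]
end

section
/- Let n ≥ 2 and 1 ≤ m ≤ n. The function λ ↦ E_m(λ)^{1/m} is concave on the open positive cone Γ₊, where E_m(λ) = ∑_{1 ≤ i₁ < ⋯ < i_m ≤ n} λ_{i₁}⋯λ_{i_m} is the m-th elementary symmetric function. -/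
/-- The m-th elementary symmetric function E_m(λ) = ∑_{i₁<⋯<i_m} λ_{i₁}⋯λ_{i_m}. -/
def elemSymm (n m : ℕ) (lam : Fin n → ℝ) : ℝ :=
  ∑ s ∈ Finset.powersetCard m (Finset.univ : Finset (Fin n)), ∏ i ∈ s, lam i

open Finset

noncomputable def parallelSum (a b : ℝ) : ℝ := a * b / (a + b)

lemma parallelSum_le_parallelSum_right {a b b' : ℝ} (ha : 0 < a) (hb : 0 < b) (hbb' : b ≤ b') :
    parallelSum a b ≤ parallelSum a b' := by
  have hb' : 0 < b' := hb.trans_le hbb'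
  rw [parallelSum, parallelSum, div_le_div_iff₀ (by positivity) (by positivity)]
  nlinarith [mul_le_mul_of_nonneg_left hbb' (mul_pos ha ha).le]

lemma parallelSum_add_le {a b c d : ℝ} (ha : 0 < a) (hb : 0 < b) (hc : 0 < c) (hd : 0 < d) :
    parallelSum a b + parallelSum c d ≤ parallelSum (a + c) (b + d) := by
  rw [parallelSum, parallelSum, parallelSum, div_add_div _ _ (by positivity) (by positivity),
    div_le_div_iff₀ (by positivity) (by positivity)]
  nlinarith [sq_nonneg (a * d - b * c), mul_pos ha hb, mul_pos hc hd, mul_pos ha hd, mul_pos hb hc]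

lemma geom_mean_add_geom_mean_le {ι : Type*} {s : Finset ι} (hs : s.Nonempty) {a b c : ι → ℝ}
    (ha : ∀ i ∈ s, 0 ≤ a i) (hb : ∀ i ∈ s, 0 ≤ b i) (hc : ∀ i ∈ s, 0 < c i)
    (habc : ∀ i ∈ s, a i + b i ≤ c i) :
    (∏ i ∈ s, a i) ^ ((1 : ℝ) / #s) + (∏ i ∈ s, b i) ^ ((1 : ℝ) / #s) ≤
      (∏ i ∈ s, c i) ^ ((1 : ℝ) / #s) := by
  set w : ℝ := 1 / #s
  have hw : 0 ≤ w := by positivity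
  have hw_sum : ∑ _i ∈ s, w = 1 := by simp [w, hs.card_ne_zero]
  have hC : 0 < (∏ i ∈ s, c i) ^ w := Real.rpow_pos_of_pos (prod_pos hc) w
  have amgm : ∀ z : ι → ℝ, (∀ i ∈ s, 0 ≤ z i) →
      (∏ i ∈ s, z i) ^ w / (∏ i ∈ s, c i) ^ w ≤ ∑ i ∈ s, w * (z i / c i) := by
    intro z hz
    have hzc : ∀ i ∈ s, 0 ≤ z i / c i := fun i hi => div_nonneg (hz i hi) (hc i hi).le
    rw [← Real.div_rpow (prod_nonneg hz) (prod_pos hc).le, ← prod_div_distrib,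
      ← Real.finsetProd_rpow _ _ hzc]
    exact Real.geom_mean_le_arith_mean_weighted s (fun _ => w) _ (fun _ _ => hw) hw_sum hzc
  rw [← div_le_one hC, add_div]
  calc _ ≤ ∑ i ∈ s, w * (a i / c i) + ∑ i ∈ s, w * (b i / c i) :=
        add_le_add (amgm a ha) (amgm b hb)
    _ ≤ ∑ _i ∈ s, w := by
        rw [← sum_add_distrib]
        refine sum_le_sum fun i hi => ?_
        rw [← mul_add, ← add_div]
        exact mul_le_of_le_one_right hw ((div_le_one (hc i hi)).2 (habc i hi))
    _ = 1 := hw_sum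

theorem ConvexCone.concaveOn_of_add_le_of_smul_eq {𝕜 E β : Type*} [Semiring 𝕜] [PartialOrder 𝕜]
    [IsOrderedRing 𝕜] [AddCommMonoid E] [Module 𝕜 E] [AddCommMonoid β] [PartialOrder β]
    [IsOrderedAddMonoid β] [Module 𝕜 β] (C : ConvexCone 𝕜 E) {f : E → β}
    (hsmul : ∀ x ∈ C, ∀ t : 𝕜, 0 < t → f (t • x) = t • f x)
    (hadd : ∀ x ∈ C, ∀ y ∈ C, f x + f y ≤ f (x + y)) : ConcaveOn 𝕜 C f := by
  refine ⟨C.convex, fun x hx y hy a b ha hb hab => ?_⟩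
  rcases ha.eq_or_lt with rfl | ha
  · rw [zero_add] at hab
    simp [hab]
  rcases hb.eq_or_lt with rfl | hb
  · rw [add_zero] at hab
    simp [hab]
  rw [← hsmul x hx a ha, ← hsmul y hy b hb]
  exact hadd _ (C.smul_mem ha hx) _ (C.smul_mem hb hy)

section Algebra

variable {ι R : Type*} [CommSemiring R]

def esymmOn (A : Finset ι) (r : ℕ) (x : ι → R) : R :=
  ∑ s ∈ A.powersetCard r, ∏ i ∈ s, x i

@[simp]
lemma esymmOn_zero (A : Finset ι) (x : ι → R) : esymmOn A 0 x = 1 := by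
  simp [esymmOn]

lemma esymmOn_one (A : Finset ι) (x : ι → R) : esymmOn A 1 x = ∑ i ∈ A, x i := by
  simp [esymmOn, powersetCard_one]

lemma esymmOn_smul (A : Finset ι) (r : ℕ) (t : R) (x : ι → R) :
    esymmOn A r (t • x) = t ^ r * esymmOn A r x := by
  rw [esymmOn, esymmOn, mul_sum]
  refine sum_congr rfl fun s hs => ?_
  rw [← (mem_powersetCard.1 hs).2, ← prod_const, ← prod_mul_distrib]
  rfl

variable [DecidableEq ι]

lemma mul_esymmOn_eq_sum_insert {A : Finset ι} {i : ι} (hi : i ∉ A) (r : ℕ) (x : ι → R) :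
    x i * esymmOn A r x = ∑ s ∈ (A.powersetCard r).image (insert i), ∏ j ∈ s, x j := by
  rw [sum_image, esymmOn, mul_sum]
  · refine sum_congr rfl fun s hs => (prod_insert fun h => hi ?_).symm
    exact (mem_powersetCard.1 hs).1 h
  · intro s hs t ht hst
    have hi_s : i ∉ s := fun h => hi ((mem_powersetCard.1 hs).1 h)
    have hi_t : i ∉ t := fun h => hi ((mem_powersetCard.1 ht).1 h)
    rw [← erase_insert hi_s, ← erase_insert hi_t]
    exact congrArg (·.erase i) hst

lemma esymmOn_insert {A : Finset ι} {i : ι} (hi : i ∉ A) (r : ℕ) (x : ι → R) :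
    esymmOn (insert i A) (r + 1) x = esymmOn A (r + 1) x + x i * esymmOn A r x := by
  rw [mul_esymmOn_eq_sum_insert hi, esymmOn, esymmOn, powersetCard_succ_insert hi]
  refine sum_union (disjoint_right.2 ?_)
  rintro _ hs hs'
  obtain ⟨t, -, rfl⟩ := mem_image.1 hs
  exact hi ((mem_powersetCard.1 hs').1 (mem_insert_self i t))

lemma esymmOn_succ_of_mem {A : Finset ι} {i : ι} (hi : i ∈ A) (r : ℕ) (x : ι → R) :
    esymmOn A (r + 1) x = esymmOn (A.erase i) (r + 1) x + x i * esymmOn (A.erase i) r x := by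
  conv_lhs => rw [← insert_erase hi]
  exact esymmOn_insert (notMem_erase i A) r x

lemma mem_image_insert_powersetCard_iff {A s : Finset ι} {i : ι} {r : ℕ} :
    (i ∈ A ∧ s ∈ ((A.erase i).powersetCard r).image (insert i)) ↔
      (i ∈ s ∧ s ∈ A.powersetCard (r + 1)) := by
  simp only [mem_image, mem_powersetCard]
  constructor
  · rintro ⟨hiA, t, ⟨htA, rfl⟩, rfl⟩
    have hit : i ∉ t := fun h => (mem_erase.1 (htA h)).1 rfl
    exact ⟨mem_insert_self i t, insert_subset hiA (htA.trans (erase_subset i A)),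
      card_insert_of_notMem hit⟩
  · rintro ⟨his, hsA, hcard⟩
    refine ⟨hsA his, s.erase i, ⟨erase_subset_erase i hsA, ?_⟩, insert_erase his⟩
    rw [card_erase_of_mem his, hcard, Nat.add_sub_cancel]

lemma sum_mul_esymmOn_erase (A : Finset ι) (r : ℕ) (x : ι → R) :
    ∑ i ∈ A, x i * esymmOn (A.erase i) r x = (r + 1) * esymmOn A (r + 1) x := by
  calc ∑ i ∈ A, x i * esymmOn (A.erase i) r x
      = ∑ i ∈ A, ∑ s ∈ ((A.erase i).powersetCard r).image (insert i), ∏ j ∈ s, x j :=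
        sum_congr rfl fun i _ => mul_esymmOn_eq_sum_insert (notMem_erase i A) r x
    _ = ∑ s ∈ A.powersetCard (r + 1), ∑ _i ∈ s, ∏ j ∈ s, x j :=
        sum_comm' fun _ _ => mem_image_insert_powersetCard_iff
    _ = (r + 1) * esymmOn A (r + 1) x := by
        rw [esymmOn, mul_sum]
        refine sum_congr rfl fun s hs => ?_
        rw [sum_const, (mem_powersetCard.1 hs).2, nsmul_eq_mul]
        push_cast
        ring

end Algebra

section Real

variable {ι : Type*}

lemma esymmOn_pos {A : Finset ι} {r : ℕ} {x : ι → ℝ} (hr : r ≤ #A) (hx : ∀ i ∈ A, 0 < x i) :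
    0 < esymmOn A r x :=
  sum_pos (fun _ hs => prod_pos fun i hi => hx i ((mem_powersetCard.1 hs).1 hi))
    (powersetCard_nonempty.2 hr)

lemma esymmOn_nonneg {A : Finset ι} {r : ℕ} {x : ι → ℝ} (hx : ∀ i ∈ A, 0 ≤ x i) :
    0 ≤ esymmOn A r x :=
  sum_nonneg fun _ hs => prod_nonneg fun i hi => hx i ((mem_powersetCard.1 hs).1 hi)

lemma esymmOn_rpow_smul {A : Finset ι} {m : ℕ} (hm : m ≠ 0) {x : ι → ℝ}
    (hx : ∀ i ∈ A, 0 ≤ x i) {t : ℝ} (ht : 0 ≤ t) :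
    esymmOn A m (t • x) ^ ((1 : ℝ) / m) = t * esymmOn A m x ^ ((1 : ℝ) / m) := by
  rw [esymmOn_smul, Real.mul_rpow (by positivity) (esymmOn_nonneg hx), one_div,
    Real.pow_rpow_inv_natCast ht hm]

noncomputable def esymmRatio (A : Finset ι) (k : ℕ) (x : ι → ℝ) : ℝ :=
  esymmOn A (k + 1) x / esymmOn A k x

lemma esymmRatio_pos {A : Finset ι} {k : ℕ} {x : ι → ℝ} (hk : k + 1 ≤ #A)
    (hx : ∀ i ∈ A, 0 < x i) : 0 < esymmRatio A k x :=
  div_pos (esymmOn_pos hk hx) (esymmOn_pos (by omega) hx)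

lemma esymmRatio_zero (A : Finset ι) (x : ι → ℝ) : esymmRatio A 0 x = ∑ i ∈ A, x i := by
  simp [esymmRatio, esymmOn_one]

lemma esymmOn_eq_prod_esymmRatio {A : Finset ι} {m : ℕ} (hm : m ≤ #A) {x : ι → ℝ}
    (hx : ∀ i ∈ A, 0 < x i) : esymmOn A m x = ∏ k ∈ range m, esymmRatio A k x := by
  induction m with
  | zero => simp
  | succ m ih =>
    rw [prod_range_succ, ← ih (by omega), esymmRatio,
      mul_div_cancel₀ _ (esymmOn_pos (by omega) hx).ne']

variable [DecidableEq ι]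

lemma esymmRatio_succ {A : Finset ι} {k : ℕ} (hk : k + 2 ≤ #A) {x : ι → ℝ}
    (hx : ∀ i ∈ A, 0 < x i) :
    esymmRatio A (k + 1) x =
      (k + 2 : ℝ)⁻¹ * ∑ i ∈ A, parallelSum (x i) (esymmRatio (A.erase i) k x) := by
  have hE : 0 < esymmOn A (k + 1) x := esymmOn_pos (by omega) hx
  have hterm : ∀ i ∈ A, parallelSum (x i) (esymmRatio (A.erase i) k x)
      = x i * esymmOn (A.erase i) (k + 1) x / esymmOn A (k + 1) x := by
    intro i hi
    have hx' : ∀ j ∈ A.erase i, 0 < x j := fun j hj => hx j (mem_of_mem_erase hj)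
    have hcard : k + 1 ≤ #(A.erase i) := by rw [card_erase_of_mem hi]; omega
    have hQ := esymmOn_pos (by omega : k ≤ #(A.erase i)) hx'
    have hP := esymmOn_pos hcard hx'
    have hxi := hx i hi
    rw [parallelSum, esymmRatio, esymmOn_succ_of_mem hi]
    field_simp
    ring
  rw [sum_congr rfl hterm, ← sum_div, sum_mul_esymmOn_erase, esymmRatio]
  push_cast
  field_simp
  ring

lemma esymmRatio_add_le (k : ℕ) {A : Finset ι} (hk : k + 1 ≤ #A) {x y : ι → ℝ}
    (hx : ∀ i ∈ A, 0 < x i) (hy : ∀ i ∈ A, 0 < y i) :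
    esymmRatio A k x + esymmRatio A k y ≤ esymmRatio A k (x + y) := by
  induction k generalizing A with
  | zero => simp [esymmRatio_zero, sum_add_distrib]
  | succ k ih =>
    have hxy : ∀ i ∈ A, 0 < (x + y) i := fun i hi => add_pos (hx i hi) (hy i hi)
    rw [esymmRatio_succ hk hx, esymmRatio_succ hk hy, esymmRatio_succ hk hxy, ← mul_add,
      ← sum_add_distrib]
    gcongr with i hi
    have hcard : k + 1 ≤ #(A.erase i) := by rw [card_erase_of_mem hi]; omega
    have hx' : ∀ j ∈ A.erase i, 0 < x j := fun j hj => hx j (mem_of_mem_erase hj)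
    have hy' : ∀ j ∈ A.erase i, 0 < y j := fun j hj => hy j (mem_of_mem_erase hj)
    calc _ ≤ parallelSum (x i + y i) (esymmRatio (A.erase i) k x + esymmRatio (A.erase i) k y) :=
          parallelSum_add_le (hx i hi) (esymmRatio_pos hcard hx') (hy i hi)
            (esymmRatio_pos hcard hy')
      _ ≤ parallelSum (x i + y i) (esymmRatio (A.erase i) k (x + y)) :=
          parallelSum_le_parallelSum_right (hxy i hi)
            (add_pos (esymmRatio_pos hcard hx') (esymmRatio_pos hcard hy')) (ih hcard hx' hy')

lemma esymmOn_rpow_add_le {A : Finset ι} {m : ℕ} (hm : 1 ≤ m) (hmA : m ≤ #A)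
    {x y : ι → ℝ} (hx : ∀ i ∈ A, 0 < x i) (hy : ∀ i ∈ A, 0 < y i) :
    esymmOn A m x ^ ((1 : ℝ) / m) + esymmOn A m y ^ ((1 : ℝ) / m) ≤
      esymmOn A m (x + y) ^ ((1 : ℝ) / m) := by
  have hxy : ∀ i ∈ A, 0 < (x + y) i := fun i hi => add_pos (hx i hi) (hy i hi)
  have hkA : ∀ k ∈ range m, k + 1 ≤ #A := fun k hk => (mem_range.1 hk).trans_le hmA
  have key := geom_mean_add_geom_mean_le (nonempty_range_iff.2 (by omega : m ≠ 0))
    (fun k hk => (esymmRatio_pos (hkA k hk) hx).le) (fun k hk => (esymmRatio_pos (hkA k hk) hy).le)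
    (fun k hk => esymmRatio_pos (hkA k hk) hxy) (fun k hk => esymmRatio_add_le k (hkA k hk) hx hy)
  rwa [card_range, ← esymmOn_eq_prod_esymmRatio hmA hx, ← esymmOn_eq_prod_esymmRatio hmA hy,
    ← esymmOn_eq_prod_esymmRatio hmA hxy] at key

end Real

def posConvexCone (n : ℕ) : ConvexCone ℝ (Fin n → ℝ) where
  carrier := posCone n
  smul_mem' _ hc _ hx i := mul_pos hc (hx i)
  add_mem' _ hx _ hy i := add_pos (hx i) (hy i)

theorem stmt_7_general (n m : ℕ) (hm1 : 1 ≤ m) (hmn : m ≤ n) :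
    ConcaveOn ℝ (posCone n) (fun lam => (elemSymm n m lam) ^ ((1 : ℝ) / m)) := by
  have hcard : m ≤ #(univ : Finset (Fin n)) := by simpa using hmn
  refine (posConvexCone n).concaveOn_of_add_le_of_smul_eq (fun x hx t ht => ?_)
    (fun x hx y hy => ?_)
  · exact esymmOn_rpow_smul (by omega) (fun i _ => (hx i).le) ht.le
  · exact esymmOn_rpow_add_le hm1 hcard (fun i _ => hx i) (fun i _ => hy i)

/-- Lemma 2.7 (i): the m-th root E_m^{1/m} is concave on the positive cone. -/
theorem stmt_7 (n m : ℕ) (hn : 2 ≤ n) (hm1 : 1 ≤ m) (hmn : m ≤ n) :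
    ConcaveOn ℝ (posCone n) (fun lam => (elemSymm n m lam) ^ ((1 : ℝ) / m)) :=
  stmt_7_general n m hm1 hmn
end

section
/- Let n ≥ 2. For any ε > 0 there exists δ = δ(ε, n) > 0 with the following property: for every λ ∈ ℝⁿ satisfying λᵢ ≥ ε·H(λ) > 0 for all i = 1,…,n, one has (n·|λ|² − H(λ)²)/H(λ)² ≥ δ·(1/nⁿ − K(λ)/H(λ)ⁿ), where H(λ) = ∑ᵢ λᵢ, |λ|² = ∑ᵢ λᵢ², and K(λ) = ∏ᵢ λᵢ. -/
open Finset

/-- For `0 < c ≤ a`, `log a ≥ (a-1) - (a-1)²/c`. -/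
lemma log_lower_aux (a c : ℝ) (hc : 0 < c) (hca : c ≤ a) :
    (a - 1) - (a - 1) ^ 2 / c ≤ Real.log a := by
  have ha : 0 < a := lt_of_lt_of_le hc hca
  have h1 : Real.log a⁻¹ ≤ a⁻¹ - 1 := Real.log_le_sub_one_of_pos (by positivity)
  rw [Real.log_inv] at h1
  have h2 : (a - 1) ^ 2 / a ≤ (a - 1) ^ 2 / c := by gcongr
  have h3 : (a - 1) - (a - 1) ^ 2 / a = 1 - a⁻¹ := by
    field_simp
    ring
  linarith

/-- Lemma 2.8 (Schulze): for any ε > 0 there is δ = δ(ε,n) > 0 such that whenever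
λᵢ ≥ ε·H(λ) > 0 for all i, one has (n|λ|² − H²)/H² ≥ δ·(1/nⁿ − K/Hⁿ). -/
theorem stmt_10 (n : ℕ) (hn : 2 ≤ n) :
    ∀ ε : ℝ, 0 < ε → ∃ δ : ℝ, 0 < δ ∧
      ∀ lam : Fin n → ℝ,
        (∀ i, ε * (∑ j, lam j) ≤ lam i) → 0 < ε * (∑ j, lam j) →
        δ * (1 / (n : ℝ) ^ n - (∏ i, lam i) / (∑ i, lam i) ^ n)
          ≤ ((n : ℝ) * (∑ i, (lam i) ^ 2) - (∑ i, lam i) ^ 2) / (∑ i, lam i) ^ 2 := by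
  have hn0 : 0 < n := by omega
  have hnR : (0:ℝ) < (n:ℝ) := by exact_mod_cast hn0
  intro ε hε
  refine ⟨(n : ℝ) ^ n * ε, by positivity, ?_⟩
  intro lam hlam hpos
  have hH : 0 < ∑ j, lam j := by nlinarith
  set H := ∑ j, lam j with hHdef
  set μ : Fin n → ℝ := fun i => lam i / H with hμdef
  have hμsum : ∑ i, μ i = 1 := by
    rw [hμdef, ← Finset.sum_div]
    exact div_self hH.ne'
  have hμlow : ∀ i, ε ≤ μ i := fun i => (le_div_iff₀ hH).mpr (hlam i)
  have hμpos : ∀ i, 0 < μ i := fun i => lt_of_lt_of_le hε (hμlow i)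
  set Q : ℝ := ∑ i, (μ i) ^ 2 with hQdef
  set S : ℝ := ∑ i, ((n:ℝ) * μ i - 1) ^ 2 with hSdef
  -- S = n² Q - n
  have hS : S = (n:ℝ) ^ 2 * Q - n := by
    rw [hSdef, hQdef]
    have : ∀ i ∈ Finset.univ, ((n:ℝ) * μ i - 1) ^ 2
        = (n:ℝ) ^ 2 * (μ i) ^ 2 - 2 * (n:ℝ) * μ i + 1 := fun i _ => by ring
    rw [Finset.sum_congr rfl this]
    rw [Finset.sum_add_distrib, Finset.sum_sub_distrib, ← Finset.mul_sum, ← Finset.mul_sum,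
      hμsum]
    simp [Finset.card_univ]
    ring
  -- sum of logs lower bound
  have hlog : ∀ i ∈ Finset.univ, ((n:ℝ) * μ i - 1) - ((n:ℝ) * μ i - 1) ^ 2 / ((n:ℝ) * ε)
      ≤ Real.log ((n:ℝ) * μ i) := by
    intro i _
    exact log_lower_aux _ _ (by positivity) (by have := hμlow i; nlinarith)
  have hsum0 : ∑ i, ((n:ℝ) * μ i - 1) = 0 := by
    rw [Finset.sum_sub_distrib, ← Finset.mul_sum, hμsum]
    simp [Finset.card_univ]
  have hsumlog : -(S / ((n:ℝ) * ε)) ≤ ∑ i, Real.log ((n:ℝ) * μ i) := by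
    have h := Finset.sum_le_sum hlog
    rw [Finset.sum_sub_distrib, hsum0, ← Finset.sum_div] at h
    rw [← hSdef] at h
    linarith
  -- product lower bound
  have hprodexp : Real.exp (∑ i, Real.log ((n:ℝ) * μ i)) = ∏ i, ((n:ℝ) * μ i) := by
    rw [Real.exp_sum]
    exact Finset.prod_congr rfl fun i _ => Real.exp_log (by have := hμpos i; positivity)
  have hprodlow : 1 - S / ((n:ℝ) * ε) ≤ ∏ i, ((n:ℝ) * μ i) := by
    have h1 : 1 + -(S / ((n:ℝ) * ε)) ≤ Real.exp (-(S / ((n:ℝ) * ε))) := by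
      linarith [Real.add_one_le_exp (-(S / ((n:ℝ) * ε)))]
    have h2 : Real.exp (-(S / ((n:ℝ) * ε))) ≤ Real.exp (∑ i, Real.log ((n:ℝ) * μ i)) :=
      Real.exp_le_exp.mpr hsumlog
    rw [hprodexp] at h2
    linarith
  have hprodsplit : ∏ i, ((n:ℝ) * μ i) = (n:ℝ) ^ n * ∏ i, μ i := by
    rw [Finset.prod_mul_distrib, Finset.prod_const, Finset.card_univ, Fintype.card_fin]
  -- back to lam
  have hprodμ : ∏ i, μ i = (∏ i, lam i) / H ^ n := by
    rw [hμdef, Finset.prod_div_distrib, Finset.prod_const, Finset.card_univ, Fintype.card_fin]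
  have hsumμ : Q = (∑ i, (lam i) ^ 2) / H ^ 2 := by
    simp only [hQdef, hμdef, div_pow, ← Finset.sum_div]
  -- key inequality, cleared form
  have key : 1 - (n:ℝ) ^ n * ((∏ i, lam i) / H ^ n) ≤ S / ((n:ℝ) * ε) := by
    rw [← hprodμ]
    nlinarith [hprodlow, hprodsplit]
  have hRHS : ((n:ℝ) * (∑ i, (lam i) ^ 2) - H ^ 2) / H ^ 2 = (n:ℝ) * Q - 1 := by
    rw [hsumμ]
    field_simp
  rw [hRHS]
  have hpow : (0:ℝ) < (n:ℝ) ^ n := by positivity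
  have hstep : (n:ℝ) ^ n * ε * (1 / (n : ℝ) ^ n - (∏ i, lam i) / H ^ n)
      = ε * (1 - (n:ℝ) ^ n * ((∏ i, lam i) / H ^ n)) := by
    field_simp
  rw [hstep]
  have hkey2 : ε * (1 - (n:ℝ) ^ n * ((∏ i, lam i) / H ^ n)) ≤ ε * (S / ((n:ℝ) * ε)) :=
    mul_le_mul_of_nonneg_left key hε.le
  have hS2 : ε * (S / ((n:ℝ) * ε)) = S / n := by
    field_simp
  rw [hS2] at hkey2
  have hfin : S / n = (n:ℝ) * Q - 1 := by
    rw [hS]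
    field_simp
  linarith [hkey2, hfin.symm.le, hfin.le]
end

section
/- Let n ≥ 2 and let f : ℝⁿ∖{0} → ℝ be continuous, symmetric, positively homogeneous of degree one, and strictly positive on the closed positive cone minus the origin, i.e. f(λ) > 0 whenever λ ≠ 0 and λᵢ ≥ 0 for all i. Then for every ε ∈ (0, 1/n) there exists a constant C = C(ε, n, f) > 0 such that: every λ = (λ₁,…,λₙ) with 0 < λ₁ ≤ λ₂ ≤ ⋯ ≤ λₙ and ∏ᵢ λᵢ > C·f(λ)ⁿ satisfies λ₁ > ε·n·f(λ). -/
/-- Convex-F case of Lemma 4.2: for f continuous away from the origin, symmetric,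
1-homogeneous and positive on the closed positive cone minus the origin, and for any
ε ∈ (0, 1/n), there is C = C(ε,n,f) > 0 such that any ordered positive λ with
K(λ) = ∏ᵢλᵢ > C·f(λ)ⁿ satisfies λ₁ > ε·n·f(λ). -/
theorem stmt_11 (n : ℕ) (hn : 2 ≤ n) (f : (Fin n → ℝ) → ℝ)
    (hcont : ContinuousOn f {x : Fin n → ℝ | x ≠ 0})
    (hsym : ∀ (σ : Equiv.Perm (Fin n)), ∀ x : Fin n → ℝ, x ≠ 0 → f (x ∘ σ) = f x)
    (hhom : ∀ k : ℝ, 0 < k → ∀ x : Fin n → ℝ, x ≠ 0 → f (k • x) = k * f x)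
    (hpos : ∀ x : Fin n → ℝ, x ≠ 0 → (∀ i, 0 ≤ x i) → 0 < f x) :
    ∀ ε ∈ Set.Ioo (0 : ℝ) (1 / n), ∃ C : ℝ, 0 < C ∧
      ∀ lam : Fin n → ℝ, 0 < lam ⟨0, by omega⟩ → Monotone lam →
        C * (f lam) ^ n < ∏ i, lam i → ε * n * f lam < lam ⟨0, by omega⟩ := by
  intro ε hε
  have hnpos : (0:ℝ) < n := by positivity
  -- the compact set K
  set K : Set (Fin n → ℝ) := {x | (∀ i, 0 ≤ x i) ∧ ‖x‖ = 1} with hKdef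
  have hKsub : K ⊆ {x : Fin n → ℝ | x ≠ 0} := by
    intro x hx
    simp only [Set.mem_setOf_eq]
    intro h
    rw [h] at hx
    have := hx.2
    simp at this
  have hKclosed : IsClosed K := by
    have h1 : IsClosed {x : Fin n → ℝ | ∀ i, 0 ≤ x i} := by
      have : {x : Fin n → ℝ | ∀ i, 0 ≤ x i} = ⋂ i, {x : Fin n → ℝ | 0 ≤ x i} := by
        ext x; simp
      rw [this]
      exact isClosed_iInter fun i => isClosed_le continuous_const (continuous_apply i)
    have h2 : IsClosed {x : Fin n → ℝ | ‖x‖ = 1} :=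
      isClosed_eq continuous_norm continuous_const
    exact h1.inter h2
  have hKcompact : IsCompact K := by
    have hb : Bornology.IsBounded K := by
      apply (Metric.isBounded_closedBall (x := (0 : Fin n → ℝ)) (r := 1)).subset
      intro x hx
      simp only [Metric.mem_closedBall, dist_zero_right]
      exact hx.2.le
    exact Metric.isCompact_of_isClosed_isBounded hKclosed hb
  have hKne : K.Nonempty := by
    refine ⟨fun _ => 1, fun i => zero_le_one, ?_⟩
    have : Nonempty (Fin n) := ⟨⟨0, by omega⟩⟩
    exact pi_norm_const (1:ℝ) |>.trans norm_one
  obtain ⟨x₀, hx₀K, hmin⟩ := hKcompact.exists_isMinOn hKne (hcont.mono hKsub)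
  have hc : 0 < f x₀ := hpos x₀ (hKsub hx₀K) hx₀K.1
  set c := f x₀ with hcdef
  -- key bound : f x ≥ c * ‖x‖ on the positive cone
  have hkey : ∀ x : Fin n → ℝ, x ≠ 0 → (∀ i, 0 ≤ x i) → c * ‖x‖ ≤ f x := by
    intro x hx hxnn
    have hnx : 0 < ‖x‖ := norm_pos_iff.mpr hx
    set y : Fin n → ℝ := ‖x‖⁻¹ • x with hy
    have hyK : y ∈ K := by
      constructor
      · intro i
        exact mul_nonneg (inv_nonneg.mpr hnx.le) (hxnn i)
      · rw [hy, norm_smul]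
        simp [abs_of_pos (inv_pos.mpr hnx), inv_mul_cancel₀ hnx.ne']
    have hxy : x = ‖x‖ • y := by
      rw [hy, smul_smul, mul_inv_cancel₀ hnx.ne', one_smul]
    have hyne : y ≠ 0 := hKsub hyK
    have hmy : f x₀ ≤ f y := isMinOn_iff.mp hmin y hyK
    calc c * ‖x‖ ≤ f y * ‖x‖ := by nlinarith
      _ = ‖x‖ * f y := mul_comm _ _
      _ = f (‖x‖ • y) := (hhom ‖x‖ hnx y hyne).symm
      _ = f x := by rw [← hxy]
  -- the constant
  have hC0 : 0 < ε * n * (1/c)^(n-1) := by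
    have hε0 := hε.1
    positivity
  refine ⟨ε * n * (1/c)^(n-1), hC0, ?_⟩
  intro lam h0 hmono hC
  by_contra hcon
  push_neg at hcon
  have hpos' : ∀ i, 0 < lam i := by
    intro i
    exact lt_of_lt_of_le h0 (hmono (by simp [Fin.le_def]))
  have hlamne : lam ≠ 0 := by
    intro h
    have := hpos' ⟨0, by omega⟩
    rw [h] at this
    simp at this
  have hfl : 0 < f lam := hpos lam hlamne (fun i => (hpos' i).le)
  have hbound : ∀ i, lam i ≤ f lam / c := by
    intro i
    have h1 : c * ‖lam‖ ≤ f lam := hkey lam hlamne (fun i => (hpos' i).le)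
    have h2 : lam i ≤ ‖lam‖ := by
      calc lam i ≤ |lam i| := le_abs_self _
        _ = ‖lam i‖ := rfl
        _ ≤ ‖lam‖ := norm_le_pi_norm lam i
    rw [le_div_iff₀ hc]
    nlinarith
  -- bound the product
  have hprod : ∏ i, lam i ≤ (ε * n * f lam) * (f lam / c)^(n-1) := by
    have hmem : (⟨0, by omega⟩ : Fin n) ∈ Finset.univ := Finset.mem_univ _
    rw [← Finset.mul_prod_erase Finset.univ lam hmem]
    have h1 : ∏ i ∈ Finset.univ.erase ⟨0, by omega⟩, lam i ≤ (f lam / c)^(n-1) := by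
      have hcard : (Finset.univ.erase (⟨0, by omega⟩ : Fin n)).card = n - 1 := by
        rw [Finset.card_erase_of_mem hmem, Finset.card_univ, Fintype.card_fin]
      calc ∏ i ∈ Finset.univ.erase ⟨0, by omega⟩, lam i
          ≤ ∏ _i ∈ Finset.univ.erase (⟨0, by omega⟩ : Fin n), (f lam / c) :=
            Finset.prod_le_prod (fun i _ => (hpos' i).le) (fun i _ => hbound i)
        _ = (f lam / c)^(n-1) := by rw [Finset.prod_const, hcard]
    have h2 : (0:ℝ) ≤ (f lam / c)^(n-1) := by positivity
    have h3 : (0:ℝ) < ∏ i ∈ Finset.univ.erase (⟨0, by omega⟩ : Fin n), lam i :=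
      Finset.prod_pos (fun i _ => hpos' i)
    nlinarith [hε.1, mul_pos hε.1 hnpos]
  have heq : (ε * n * f lam) * (f lam / c)^(n-1) = ε * n * (1/c)^(n-1) * (f lam)^n := by
    have : (f lam)^n = f lam * (f lam)^(n-1) := by
      conv_lhs => rw [show n = (n-1) + 1 by omega]
      ring
    rw [this, div_pow, div_pow, one_pow]
    field_simp
  rw [heq] at hprod
  linarith
end

section
/- Let n ≥ 2, ε > 0 and c > 0. Let A = (A_{jl}) be a real symmetric positive definite n×n matrix whose smallest eigenvalue λ₁ satisfies λ₁ ≥ ε·tr(A). Let T = (T_{ijl}) be a real 3-tensor on ℝⁿ that is totally symmetric (invariant under all permutations of its three indices), and let V ∈ ℝⁿ. Then ∑_{i,j,l=1}^n (c·T_{ijl} − Vᵢ·A_{jl})² ≥ ((n−1)/2)·ε²·c²·∑_{i,j,l=1}^n T_{ijl}². -/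
set_option maxHeartbeats 2000000
open Matrix


/-- Algebraic core of Lemmas 4.4/4.5 (key estimate): if A is symmetric positive definite
with smallest eigenvalue ≥ ε·tr(A), T is a totally symmetric 3-tensor, V a vector and c > 0,
then ∑ (c·T_{ijl} − Vᵢ·A_{jl})² ≥ ((n−1)/2)·ε²·c²·∑ T_{ijl}². -/
theorem stmt_13 (n : ℕ) (hn : 2 ≤ n) (ε c : ℝ) (hε : 0 < ε) (hc : 0 < c)
    (A : Matrix (Fin n) (Fin n) ℝ) (hsymm : A.IsSymm) (hA : A.PosDef)
    (heig : ∀ i, ε * A.trace ≤ hA.1.eigenvalues i)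
    (T : Fin n → Fin n → Fin n → ℝ)
    (hT1 : ∀ i j l, T i j l = T j i l)
    (hT2 : ∀ i j l, T i j l = T i l j)
    (V : Fin n → ℝ) :
    ((n : ℝ) - 1) / 2 * ε ^ 2 * c ^ 2 * ∑ i, ∑ j, ∑ l, (T i j l) ^ 2
      ≤ ∑ i, ∑ j, ∑ l, (c * T i j l - V i * A j l) ^ 2 := by
  classical
  have hL := hA.1.eigenvalues
  -- trace = sum of eigenvalues
  set U : Matrix (Fin n) (Fin n) ℝ := (hA.1.eigenvectorUnitary : Matrix (Fin n) (Fin n) ℝ) with hU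
  set D : Matrix (Fin n) (Fin n) ℝ := diagonal (RCLike.ofReal ∘ hA.1.eigenvalues) with hD
  have hs : star U * U = 1 := Unitary.coe_star_mul_self _
  have hs' : U * star U = 1 := Unitary.coe_mul_star_self _
  have hspec : A = U * D * star U := hA.1.spectral_theorem
  have htr : A.trace = ∑ i, hA.1.eigenvalues i := by
    calc A.trace = (U * D * star U).trace := by rw [← hspec]
      _ = D.trace := by
          rw [trace_mul_comm, ← Matrix.mul_assoc, hs, one_mul]
      _ = ∑ i, hA.1.eigenvalues i := by simp [hD, trace_diagonal]
  have hLpos : ∀ i, 0 < hA.1.eigenvalues i := hA.eigenvalues_pos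
  have hn0 : (0:Fin n → ℝ) ≠ 0 → True := fun _ => trivial
  have hne : Nonempty (Fin n) := ⟨⟨0, by omega⟩⟩
  have htrpos : 0 < A.trace := by
    rw [htr]; exact Finset.sum_pos (fun i _ => hLpos i) Finset.univ_nonempty
  -- Frobenius norm = sum of squared eigenvalues
  set aN := ∑ i, ∑ j, A i j ^ 2 with haN
  have hfrob : aN = ∑ i, hA.1.eigenvalues i ^ 2 := by
    have hAA : A * A = U * (D * D) * star U := by
      rw [hspec]
      calc U * D * star U * (U * D * star U) = U * D * (star U * U) * D * star U := by
            simp only [Matrix.mul_assoc]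
        _ = U * (D * D) * star U := by rw [hs]; simp only [Matrix.mul_one, Matrix.mul_assoc]
    have h1 : (A * A).trace = ∑ i, hA.1.eigenvalues i ^ 2 := by
      rw [hAA, trace_mul_comm, ← Matrix.mul_assoc, hs, one_mul,
        hD, diagonal_mul_diagonal, trace_diagonal]
      simp [sq]
    rw [← h1, Matrix.trace, haN]
    refine Finset.sum_congr rfl fun i _ => ?_
    simp only [Matrix.diag_apply, Matrix.mul_apply]
    exact Finset.sum_congr rfl fun j _ => by rw [sq, hsymm.apply i j]
  -- epsilon is small
  have hnr : (2:ℝ) ≤ (n:ℝ) := by exact_mod_cast hn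
  have hnε : (n:ℝ) * ε ≤ 1 := by
    have : (n:ℝ) * (ε * A.trace) ≤ A.trace := by
      calc (n:ℝ) * (ε * A.trace) = ∑ _i : Fin n, ε * A.trace := by
            simp [Finset.sum_const, Finset.card_univ]
        _ ≤ ∑ i, hA.1.eigenvalues i := Finset.sum_le_sum fun i _ => heig i
        _ = A.trace := htr.symm
    nlinarith [htrpos]
  set e2 : ℝ := ((n:ℝ) - 1) * ε ^ 2 with he2
  have he2pos : 0 < e2 := by
    apply mul_pos; linarith; positivity
  have he2le : e2 ≤ 1/4 := by
    have h1 : ((n:ℝ)*ε)^2 ≤ 1 := by nlinarith [mul_pos (by linarith : (0:ℝ) < (n:ℝ)) hε]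
    have h2 : (0:ℝ) ≤ ((n:ℝ)^2 - 4*((n:ℝ)-1)) * ε^2 :=
      mul_nonneg (by nlinarith [sq_nonneg ((n:ℝ) - 2)]) (sq_nonneg ε)
    rw [he2]; nlinarith
  -- eigenvalue bound: each eigenvalue² ≤ (1-e2)·aN
  have haNnn : 0 ≤ aN := by
    rw [haN]; positivity
  have htr2 : aN ≤ A.trace ^ 2 := by
    rw [hfrob, htr]
    exact Finset.sum_sq_le_sq_sum_of_nonneg fun i _ => (hLpos i).le
  have hk : ∀ i, hA.1.eigenvalues i ^ 2 ≤ (1 - e2) * aN := by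
    intro i
    have hsplit : ∑ j ∈ Finset.univ.erase i, hA.1.eigenvalues j ^ 2
        + hA.1.eigenvalues i ^ 2 = aN := by
      rw [hfrob]; exact Finset.sum_erase_add _ _ (Finset.mem_univ i)
    have hcard : (Finset.univ.erase i).card = n - 1 := by
      rw [Finset.card_erase_of_mem (Finset.mem_univ i), Finset.card_univ, Fintype.card_fin]
    have hterm : ∀ j ∈ Finset.univ.erase i, (ε * A.trace)^2 ≤ hA.1.eigenvalues j ^ 2 := by
      intro j _
      have := heig j
      nlinarith [mul_pos hε htrpos]
    have hlow : ((n:ℝ) - 1) * (ε * A.trace) ^ 2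
        ≤ ∑ j ∈ Finset.univ.erase i, hA.1.eigenvalues j ^ 2 := by
      have h0 := Finset.card_nsmul_le_sum (Finset.univ.erase i) _ _ hterm
      rw [hcard] at h0
      have hcast : ((n - 1 : ℕ) : ℝ) = (n:ℝ) - 1 := by
        push_cast [Nat.cast_sub (by omega : 1 ≤ n)]; ring
      simpa [nsmul_eq_mul, hcast] using h0
    have h3 : ((n:ℝ) - 1) * (ε^2 * aN) ≤ ((n:ℝ) - 1) * (ε * A.trace)^2 := by
      apply mul_le_mul_of_nonneg_left _ (by linarith)
      calc ε^2 * aN ≤ ε^2 * A.trace^2 :=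
            mul_le_mul_of_nonneg_left htr2 (sq_nonneg ε)
        _ = (ε * A.trace)^2 := by ring
    have hexp : (1 - e2) * aN = aN - ((n:ℝ)-1) * (ε^2 * aN) := by rw [he2]; ring
    rw [hexp]; linarith

  -- notation for the main sums
  set tN := ∑ i, ∑ j, ∑ l, (T i j l)^2 with htN
  set vN := ∑ i, (V i)^2 with hvN
  set avN := ∑ l, (∑ j, A l j * V j)^2 with havN
  set S := ∑ i, ∑ j, ∑ l, T i j l * (V i * A j l) with hSdef
  -- |A V|^2 ≤ (1-e2) aN |V|^2
  have h5 : avN ≤ ((1 - e2) * aN) * vN := by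
    set w : Fin n → ℝ := (star U) *ᵥ V with hw
    have hUt : Uᵀ = star U := (Matrix.conjTranspose_eq_transpose_of_trivial U).symm
    have hdot : ∀ x y : Fin n → ℝ, (U *ᵥ x) ⬝ᵥ (U *ᵥ y) = x ⬝ᵥ y := by
      intro x y
      rw [dotProduct_mulVec, ← mulVec_transpose, mulVec_mulVec, hUt, hs, one_mulVec]
    have hV : U *ᵥ w = V := by rw [hw, mulVec_mulVec, hs', one_mulVec]
    have hAV : A *ᵥ V = U *ᵥ (D *ᵥ w) := by
      rw [hspec, hw, ← mulVec_mulVec, ← mulVec_mulVec]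
    have e1 : avN = ∑ i, (hA.1.eigenvalues i)^2 * (w i)^2 := by
      have h0 : avN = (A *ᵥ V) ⬝ᵥ (A *ᵥ V) := by
        rw [havN]; simp [Matrix.mulVec, dotProduct, sq]
      rw [h0, hAV, hdot]
      simp only [dotProduct, hD, mulVec_diagonal, Function.comp_apply,
        RCLike.ofReal_real_eq_id, id_eq]
      exact Finset.sum_congr rfl fun i _ => by ring
    have e2' : vN = ∑ i, (w i)^2 := by
      have h0 : vN = V ⬝ᵥ V := by rw [hvN]; simp [dotProduct, sq]
      rw [h0, ← hV, hdot]
      simp [dotProduct, sq]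
    rw [e1, e2', Finset.mul_sum]
    exact Finset.sum_le_sum fun i _ =>
      mul_le_mul_of_nonneg_right (hk i) (sq_nonneg _)
  -- cyclic reindexing of triple sums
  have cyc : ∀ f : Fin n → Fin n → Fin n → ℝ,
      (∑ i, ∑ j, ∑ l, f i j l) = ∑ j, ∑ l, ∑ i, f i j l := by
    intro f
    rw [Finset.sum_comm]
    exact Finset.sum_congr rfl fun j _ => Finset.sum_comm
  -- symmetrization of the cross term
  have hS2 : ∑ i, ∑ j, ∑ l, T i j l * (V j * A i l) = S := by
    rw [Finset.sum_comm, hSdef]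
    exact Finset.sum_congr rfl fun i _ => Finset.sum_congr rfl fun j _ =>
      Finset.sum_congr rfl fun l _ => by rw [← hT1 i j l]
  have hS3 : ∑ i, ∑ j, ∑ l, T i j l * (V l * A i j) = S := by
    rw [hSdef, cyc (fun a b c => T a b c * (V a * A b c))]
    exact Finset.sum_congr rfl fun i _ => Finset.sum_congr rfl fun j _ =>
      Finset.sum_congr rfl fun l _ => by rw [hT2 i j l, hT1 i l j]
  -- square sums
  have hsq1 : ∑ i, ∑ j, ∑ l, (V i * A j l)^2 = vN * aN := by
    simp_rw [mul_pow, ← Finset.mul_sum]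
    rw [← Finset.sum_mul, ← hvN, ← haN]
  have hsq2 : ∑ i, ∑ j, ∑ l, (V j * A i l)^2 = vN * aN := by
    rw [Finset.sum_comm]; exact hsq1
  have hsq3 : ∑ i, ∑ j, ∑ l, (V l * A i j)^2 = vN * aN := by
    rw [cyc (fun i j l => (V l * A i j)^2), cyc (fun x y z => (V y * A z x)^2)]
    exact hsq1
  -- cross sums
  have hav : avN = ∑ x, ∑ y, ∑ z, (A x y * V y) * (A x z * V z) := by
    rw [havN]; simp_rw [sq, Finset.sum_mul_sum]
  have hcross1 : ∑ i, ∑ j, ∑ l, (V i * A j l) * (V j * A i l) = avN := by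
    rw [cyc (fun i j l => (V i * A j l) * (V j * A i l)),
      cyc (fun x y z => (V z * A x y) * (V x * A z y)), hav]
    refine Finset.sum_congr rfl fun x _ => Finset.sum_congr rfl fun y _ =>
      Finset.sum_congr rfl fun z _ => ?_
    rw [hsymm.apply x z, hsymm.apply x y]; ring
  have hcross2 : ∑ i, ∑ j, ∑ l, (V i * A j l) * (V l * A i j) = avN := by
    rw [cyc (fun i j l => (V i * A j l) * (V l * A i j)), hav]
    refine Finset.sum_congr rfl fun x _ => Finset.sum_congr rfl fun y _ =>
      Finset.sum_congr rfl fun z _ => ?_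
    rw [hsymm.apply x z]; ring
  have hcross3 : ∑ i, ∑ j, ∑ l, (V j * A i l) * (V l * A i j) = avN := by
    rw [hav]
    refine Finset.sum_congr rfl fun x _ => Finset.sum_congr rfl fun y _ =>
      Finset.sum_congr rfl fun z _ => ?_
    ring
  -- expansion of the target
  have hQ : ∑ i, ∑ j, ∑ l, (c * T i j l - V i * A j l)^2
      = c^2*tN - 2*c*S + vN*aN := by
    have e : ∀ i j l : Fin n, (c * T i j l - V i * A j l)^2
        = c^2*(T i j l)^2 - 2*c*(T i j l * (V i * A j l)) + (V i * A j l)^2 :=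
      fun i j l => by ring
    simp_rw [e, Finset.sum_add_distrib, Finset.sum_sub_distrib, ← Finset.mul_sum]
    rw [← htN, ← hSdef, hsq1]
  -- weighted AM-GM
  set s3 : ℝ := 3 - 2*e2 with hs3
  have hbig : ∑ i, ∑ j, ∑ l,
        (2*(s3*(c*T i j l))*((V i*A j l) + (V j*A i l) + (V l*A i j)))
      ≤ ∑ i, ∑ j, ∑ l,
        ((s3*(c*T i j l))^2 + ((V i*A j l) + (V j*A i l) + (V l*A i j))^2) :=
    Finset.sum_le_sum fun i _ => Finset.sum_le_sum fun j _ =>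
      Finset.sum_le_sum fun l _ => two_mul_le_add_sq _ _
  have hLHS : ∑ i, ∑ j, ∑ l,
      (2*(s3*(c*T i j l))*((V i*A j l) + (V j*A i l) + (V l*A i j))) = 6*s3*c*S := by
    have e : ∀ i j l : Fin n,
        2*(s3*(c*T i j l))*((V i*A j l) + (V j*A i l) + (V l*A i j))
        = 2*s3*c*(T i j l*(V i*A j l)) + 2*s3*c*(T i j l*(V j*A i l))
          + 2*s3*c*(T i j l*(V l*A i j)) := fun i j l => by ring
    simp_rw [e, Finset.sum_add_distrib, ← Finset.mul_sum]
    rw [← hSdef, hS2, hS3]; ring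
  have hRHS : ∑ i, ∑ j, ∑ l,
      ((s3*(c*T i j l))^2 + ((V i*A j l) + (V j*A i l) + (V l*A i j))^2)
      = s3^2*c^2*tN + (3*(vN*aN) + 6*avN) := by
    have e : ∀ i j l : Fin n,
        (s3*(c*T i j l))^2 + ((V i*A j l) + (V j*A i l) + (V l*A i j))^2
        = s3^2*c^2*(T i j l)^2 + ((V i*A j l)^2 + ((V j*A i l)^2 + ((V l*A i j)^2
          + (2*((V i*A j l)*(V j*A i l)) + (2*((V i*A j l)*(V l*A i j))
          + 2*((V j*A i l)*(V l*A i j))))))) := fun i j l => by ring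
    simp_rw [e, Finset.sum_add_distrib, ← Finset.mul_sum]
    rw [← htN, hsq1, hsq2, hsq3, hcross1, hcross2, hcross3]; ring
  rw [hLHS, hRHS] at hbig
  -- final arithmetic
  have htNnn : 0 ≤ tN := by
    rw [htN]
    exact Finset.sum_nonneg fun i _ => Finset.sum_nonneg fun j _ =>
      Finset.sum_nonneg fun l _ => sq_nonneg _
  have hvNnn : 0 ≤ vN := by
    rw [hvN]; exact Finset.sum_nonneg fun i _ => sq_nonneg _
  have hkey : 6*s3*c*S ≤ s3^2*c^2*tN + 3*(vN*aN) + 6*(((1-e2)*aN)*vN) := by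
    linarith [hbig, h5]
  rw [hs3] at hkey
  have hgoal : ((n:ℝ)-1)/2*ε^2*c^2*tN = e2/2*(c^2*tN) := by rw [he2]; ring
  rw [hQ, hgoal]
  have hhint : 0 ≤ e2 * (3/2 - e2) * (c^2*tN) :=
    mul_nonneg (mul_nonneg he2pos.le (by linarith)) (mul_nonneg (sq_nonneg c) htNnn)
  have hx : 0 ≤ (9 - 6*e2) * ((c^2*tN - 2*c*S + vN*aN) - e2/2*(c^2*tN)) := by
    nlinarith [hkey, hhint]
  nlinarith [hx, he2le]
end
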